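/- arXiv:2206.14857 — 4 statements merged into one kernel-verified Lean document; each statement's English description precedes it below -/
import Mathlib

section
/- In any associative ℂ-algebra containing elements x^±_{1,0}, x^±_{1,1}, x^±_{2,0}, x^±_{2,1} satisfying the rank-2 Yangian relations (Y4) and the Serre relations (Y6) for the Cartan matrix A = [[2, −p], [−1, 2]] with p ∈ {1,2,3} (so d₁ = 1, d₂ = p), one has [x^±_{2,1}, [x^±_{2,0}, x^±_{1,0}]] = ± ħ p x^±_{2,0} [x^±_{2,0}, x^±_{1,0}]. -/
lemma rank2_aux {A : Type*} [Ring A] [Algebra ℂ A] (s : ℂ) (x10 x11 x20 x21 : A)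
    (hY4 : ⁅x21, x10⁆ - ⁅x20, x11⁆ = s • (x20 * x10 + x10 * x20))
    (hS0 : ⁅x20, ⁅x20, x10⁆⁆ = 0) (hS1 : ⁅x20, ⁅x20, x11⁆⁆ = 0)
    (hS : ⁅x21, ⁅x20, x10⁆⁆ = -⁅x20, ⁅x21, x10⁆⁆) :
    ⁅x21, ⁅x20, x10⁆⁆ = (-2 * s) • (x20 * ⁅x20, x10⁆) := by
  have hc : x20 * ⁅x20, x10⁆ = ⁅x20, x10⁆ * x20 := by
    have h := hS0
    rw [Ring.lie_def] at h
    exact sub_eq_zero.mp h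
  have hY4' : ⁅x21, x10⁆ = ⁅x20, x11⁆ + s • (x20 * x10 + x10 * x20) :=
    sub_eq_iff_eq_add'.mp hY4
  have key : ⁅x20, x20 * x10 + x10 * x20⁆ = (2 : ℂ) • (x20 * ⁅x20, x10⁆) := by
    have expand : x20 * (x20 * x10 + x10 * x20) - (x20 * x10 + x10 * x20) * x20
        = x20 * (x20 * x10 - x10 * x20) + (x20 * x10 - x10 * x20) * x20 := by
      noncomm_ring
    rw [Ring.lie_def, expand, ← Ring.lie_def x20 x10, ← hc, two_smul]
  letI := LieRing.ofAssociativeRing (A := A)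
  rw [hS, hY4', lie_add, hS1, lie_smul, key, zero_add, smul_smul, ← neg_smul]
  ring_nf

/-- In any associative ℂ-algebra containing elements `x^±_{1,0}, x^±_{1,1}, x^±_{2,0}, x^±_{2,1}`
satisfying the rank-2 Yangian relations (Y4) and the Serre relations (Y6) for the Cartan matrix
`[[2, −p], [−1, 2]]` with `p ∈ {1,2,3}` (so `d₁ = 1`, `d₂ = p`), one has
`[x^±_{2,1}, [x^±_{2,0}, x^±_{1,0}]] = ± ħ p x^±_{2,0} [x^±_{2,0}, x^±_{1,0}]`. -/
theorem rank2_serre_bracket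
    {A : Type*} [Ring A] [Algebra ℂ A]
    (hbar : ℂ) (p : ℕ) (hp : p = 1 ∨ p = 2 ∨ p = 3)
    (xp10 xp11 xp20 xp21 xm10 xm11 xm20 xm21 : A)
    -- (Y4) with `(i,j) = (2,1)`, `r = s = 0`, using `d₂ a₂₁ = −p`:
    (hY4p : ⁅xp21, xp10⁆ - ⁅xp20, xp11⁆ = -((p * hbar / 2) • (xp20 * xp10 + xp10 * xp20)))
    (hY4m : ⁅xm21, xm10⁆ - ⁅xm20, xm11⁆ = (p * hbar / 2) • (xm20 * xm10 + xm10 * xm20))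
    -- Serre relations (Y6): `x^±_{2,0}` commutes with `[x^±_{2,0}, x^±_{1,k}]` for `k = 0, 1`:
    (hSp0 : ⁅xp20, ⁅xp20, xp10⁆⁆ = 0) (hSp1 : ⁅xp20, ⁅xp20, xp11⁆⁆ = 0)
    (hSm0 : ⁅xm20, ⁅xm20, xm10⁆⁆ = 0) (hSm1 : ⁅xm20, ⁅xm20, xm11⁆⁆ = 0)
    -- symmetrized Serre relation (Y6) with one index raised:
    (hSp : ⁅xp21, ⁅xp20, xp10⁆⁆ = -⁅xp20, ⁅xp21, xp10⁆⁆)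
    (hSm : ⁅xm21, ⁅xm20, xm10⁆⁆ = -⁅xm20, ⁅xm21, xm10⁆⁆) :
    ⁅xp21, ⁅xp20, xp10⁆⁆ = (hbar * p) • (xp20 * ⁅xp20, xp10⁆) ∧
    ⁅xm21, ⁅xm20, xm10⁆⁆ = -((hbar * p) • (xm20 * ⁅xm20, xm10⁆)) := by
  constructor
  · have h := rank2_aux (-(p * hbar / 2)) xp10 xp11 xp20 xp21
      (by rw [neg_smul]; exact hY4p) hSp0 hSp1 hSp
    rwa [show (-2 : ℂ) * -(p * hbar / 2) = hbar * p by ring] at h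
  · have h := rank2_aux (p * hbar / 2) xm10 xm11 xm20 xm21 hY4m hSm0 hSm1 hSm
    rwa [show (-2 : ℂ) * (p * hbar / 2) = -(hbar * p) by ring, neg_smul] at h
end

section
/- With notation as in the rank-2 setting (Cartan matrix [[2,−p],[−1,2]], p ∈ {1,2,3}), set x⁻_{3,0} = [x⁻_{2,0}, x⁻_{1,0}] and x⁺_{3,0} = (1/p)[x⁺_{1,0}, x⁺_{2,0}]. Then in the Yangian one has [x⁺_{3,0}, x⁺_{2,1}] = −pħ x⁺_{2,0} x⁺_{3,0} and [x⁻_{3,0}, x⁻_{2,1}] = pħ x⁻_{2,0} x⁻_{3,0}. -/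
/-- Rank-2 setting (Cartan matrix `[[2,−p],[−1,2]]`, `p ∈ {1,2,3}`). Set
`x⁻_{3,0} = [x⁻_{2,0}, x⁻_{1,0}]` and `x⁺_{3,0} = (1/p)[x⁺_{1,0}, x⁺_{2,0}]`. Then in the
Yangian one has `[x⁺_{3,0}, x⁺_{2,1}] = −pħ x⁺_{2,0} x⁺_{3,0}` and
`[x⁻_{3,0}, x⁻_{2,1}] = pħ x⁻_{2,0} x⁻_{3,0}`. -/
theorem rank2_root_vector_brackets
    {A : Type*} [Ring A] [Algebra ℂ A]
    (hbar : ℂ) (p : ℕ) (hp : p = 1 ∨ p = 2 ∨ p = 3)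
    (xp10 xp11 xp20 xp21 xm10 xm11 xm20 xm21 : A)
    -- (Y4) with `(i,j) = (2,1)`, `r = s = 0`, using `d₂ a₂₁ = −p`:
    (hY4p : ⁅xp21, xp10⁆ - ⁅xp20, xp11⁆ = -((p * hbar / 2) • (xp20 * xp10 + xp10 * xp20)))
    (hY4m : ⁅xm21, xm10⁆ - ⁅xm20, xm11⁆ = (p * hbar / 2) • (xm20 * xm10 + xm10 * xm20))
    -- Serre relations (Y6): `x^±_{2,0}` commutes with `[x^±_{2,0}, x^±_{1,k}]` for `k = 0, 1`:
    (hSp0 : ⁅xp20, ⁅xp20, xp10⁆⁆ = 0) (hSp1 : ⁅xp20, ⁅xp20, xp11⁆⁆ = 0)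
    (hSm0 : ⁅xm20, ⁅xm20, xm10⁆⁆ = 0) (hSm1 : ⁅xm20, ⁅xm20, xm11⁆⁆ = 0)
    -- symmetrized Serre relation (Y6) with one index raised:
    (hSp : ⁅xp21, ⁅xp20, xp10⁆⁆ = -⁅xp20, ⁅xp21, xp10⁆⁆)
    (hSm : ⁅xm21, ⁅xm20, xm10⁆⁆ = -⁅xm20, ⁅xm21, xm10⁆⁆)
    (xp30 xm30 : A)
    (hxp30 : xp30 = ((p : ℂ)⁻¹) • ⁅xp10, xp20⁆)
    (hxm30 : xm30 = ⁅xm20, xm10⁆) :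
    ⁅xp30, xp21⁆ = -((p * hbar) • (xp20 * xp30)) ∧
    ⁅xm30, xm21⁆ = (p * hbar) • (xm20 * xm30) := by
  have hpne : (p : ℂ) ≠ 0 := Nat.cast_ne_zero.mpr (by omega)
  letI : LieRing A := LieRing.ofAssociativeRing
  constructor
  · -- plus part
    subst hxp30
    have h1 : ⁅xp21, xp10⁆ =
        ⁅xp20, xp11⁆ - ((p : ℂ) * hbar / 2) • (xp20 * xp10 + xp10 * xp20) := by
      rw [sub_eq_iff_eq_add] at hY4p; rw [hY4p]; abel
    have hc : xp20 * ⁅xp20, xp10⁆ = ⁅xp20, xp10⁆ * xp20 := by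
      rw [Ring.lie_def xp20 ⁅xp20, xp10⁆, sub_eq_zero] at hSp0; exact hSp0
    have hS : ⁅xp20, xp20 * xp10 + xp10 * xp20⁆
        = xp20 * ⁅xp20, xp10⁆ + ⁅xp20, xp10⁆ * xp20 := by
      simp only [Ring.lie_def]; noncomm_ring
    have hsk : ⁅⁅xp10, xp20⁆, xp21⁆ = ⁅xp21, ⁅xp20, xp10⁆⁆ := by
      simp only [Ring.lie_def]; noncomm_ring
    have hsk2 : ⁅xp10, xp20⁆ = -⁅xp20, xp10⁆ := by
      simp only [Ring.lie_def]; noncomm_ring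
    rw [smul_lie, hsk, hSp, h1, lie_sub, hSp1, lie_smul, hS, ← hc, hsk2,
      smul_neg, mul_smul_comm, mul_neg]
    match_scalars
    field_simp
    ring
  · -- minus part
    subst hxm30
    have h1 : ⁅xm21, xm10⁆ =
        ⁅xm20, xm11⁆ + ((p : ℂ) * hbar / 2) • (xm20 * xm10 + xm10 * xm20) := by
      rw [sub_eq_iff_eq_add] at hY4m; rw [hY4m]; abel
    have hc : xm20 * ⁅xm20, xm10⁆ = ⁅xm20, xm10⁆ * xm20 := by
      rw [Ring.lie_def xm20 ⁅xm20, xm10⁆, sub_eq_zero] at hSm0; exact hSm0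
    have hS : ⁅xm20, xm20 * xm10 + xm10 * xm20⁆
        = xm20 * ⁅xm20, xm10⁆ + ⁅xm20, xm10⁆ * xm20 := by
      simp only [Ring.lie_def]; noncomm_ring
    have hsk : ⁅⁅xm20, xm10⁆, xm21⁆ = -⁅xm21, ⁅xm20, xm10⁆⁆ := by
      simp only [Ring.lie_def]; noncomm_ring
    rw [hsk, hSm, neg_neg, h1, lie_add, hSm1, lie_smul, hS, ← hc]
    match_scalars
    ring
end

section
/- In the tensor square of the rank-2 Yangian, with x^±_{3,0} as above, the commutator [x⁻_{3,0} ⊗ x⁺_{3,0}, x⁻_{2,0} ⊗ x⁺_{2,1} − x⁻_{2,1} ⊗ x⁺_{2,0}] equals −2pħ · x⁻_{3,0} x⁻_{2,0} ⊗ x⁺_{3,0} x⁺_{2,0}; in particular it is nonzero provided x⁻_{3,0} x⁻_{2,0} ⊗ x⁺_{3,0} x⁺_{2,0} ≠ 0. -/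
open TensorProduct

/-- In the tensor square of the rank-2 Yangian (Cartan matrix `[[2,−p],[−1,2]]`, `p ∈ {1,2,3}`),
with `x⁻_{3,0} = [x⁻_{2,0}, x⁻_{1,0}]` and `x⁺_{3,0} = (1/p)[x⁺_{1,0}, x⁺_{2,0}]`, the commutator
`[x⁻_{3,0} ⊗ x⁺_{3,0}, x⁻_{2,0} ⊗ x⁺_{2,1} − x⁻_{2,1} ⊗ x⁺_{2,0}]` equals
`−2pħ · x⁻_{3,0}x⁻_{2,0} ⊗ x⁺_{3,0}x⁺_{2,0}`; in particular it is nonzero provided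
`x⁻_{3,0}x⁻_{2,0} ⊗ x⁺_{3,0}x⁺_{2,0} ≠ 0`. -/
theorem rank2_tensor_commutator
    {A : Type*} [Ring A] [Algebra ℂ A]
    (hbar : ℂ) (hhbar : hbar ≠ 0) (p : ℕ) (hp : p = 1 ∨ p = 2 ∨ p = 3)
    (xp10 xp11 xp20 xp21 xm10 xm11 xm20 xm21 : A)
    -- (Y4) with `(i,j) = (2,1)`, `r = s = 0`, using `d₂ a₂₁ = −p`:
    (hY4p : ⁅xp21, xp10⁆ - ⁅xp20, xp11⁆ = -((p * hbar / 2) • (xp20 * xp10 + xp10 * xp20)))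
    (hY4m : ⁅xm21, xm10⁆ - ⁅xm20, xm11⁆ = (p * hbar / 2) • (xm20 * xm10 + xm10 * xm20))
    -- Serre relations (Y6): `x^±_{2,0}` commutes with `[x^±_{2,0}, x^±_{1,k}]` for `k = 0, 1`:
    (hSp0 : ⁅xp20, ⁅xp20, xp10⁆⁆ = 0) (hSp1 : ⁅xp20, ⁅xp20, xp11⁆⁆ = 0)
    (hSm0 : ⁅xm20, ⁅xm20, xm10⁆⁆ = 0) (hSm1 : ⁅xm20, ⁅xm20, xm11⁆⁆ = 0)
    -- symmetrized Serre relation (Y6) with one index raised: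
    (hSp : ⁅xp21, ⁅xp20, xp10⁆⁆ = -⁅xp20, ⁅xp21, xp10⁆⁆)
    (hSm : ⁅xm21, ⁅xm20, xm10⁆⁆ = -⁅xm20, ⁅xm21, xm10⁆⁆)
    (xp30 xm30 : A)
    (hxp30 : xp30 = ((p : ℂ)⁻¹) • ⁅xp10, xp20⁆)
    (hxm30 : xm30 = ⁅xm20, xm10⁆) :
    ⁅xm30 ⊗ₜ[ℂ] xp30, xm20 ⊗ₜ[ℂ] xp21 - xm21 ⊗ₜ[ℂ] xp20⁆ =
      (-(2 * p * hbar)) • ((xm30 * xm20) ⊗ₜ[ℂ] (xp30 * xp20)) ∧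
    ((xm30 * xm20) ⊗ₜ[ℂ] (xp30 * xp20) ≠ (0 : A ⊗[ℂ] A) →
      ⁅xm30 ⊗ₜ[ℂ] xp30, xm20 ⊗ₜ[ℂ] xp21 - xm21 ⊗ₜ[ℂ] xp20⁆ ≠ (0 : A ⊗[ℂ] A)) := by
  letI := LieRing.ofAssociativeRing (A := A)
  have hpC : (p : ℂ) ≠ 0 := by
    rcases hp with h | h | h <;> simp [h]
  -- x⁻₃₀ commutes with x⁻₂₀
  have e1 : xm30 * xm20 = xm20 * xm30 := by
    have h := hSm0
    rw [← hxm30, Ring.lie_def, sub_eq_zero] at h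
    exact h.symm
  -- x⁺₃₀ commutes with x⁺₂₀
  have e2 : xp30 * xp20 = xp20 * xp30 := by
    have h : ⁅xp20, xp30⁆ = 0 := by
      rw [hxp30, lie_smul, ← lie_skew xp10 xp20, lie_neg, hSp0, neg_zero, smul_zero]
    rw [Ring.lie_def, sub_eq_zero] at h
    exact h.symm
  -- ⁅x⁻₃₀, x⁻₂₁⁆ = pħ x⁻₂₀ x⁻₃₀
  have hc : ⁅xm21, xm10⁆ = ⁅xm20, xm11⁆ + ((p : ℂ) * hbar / 2) • (xm20 * xm10 + xm10 * xm20) :=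
    sub_eq_iff_eq_add'.mp hY4m
  have h2m : ⁅xm20, xm20 * xm10 + xm10 * xm20⁆ =
      xm20 * ⁅xm20, xm10⁆ + ⁅xm20, xm10⁆ * xm20 := by
    rw [Ring.lie_def, Ring.lie_def]
    noncomm_ring
  have h3m : xm20 * ⁅xm20, xm10⁆ + ⁅xm20, xm10⁆ * xm20 = (2 : ℂ) • (xm20 * xm30) := by
    rw [← hxm30, e1]
    module
  have hlm : ⁅xm30, xm21⁆ = ((p : ℂ) * hbar) • (xm20 * xm30) := by
    conv_lhs => rw [hxm30]
    rw [← lie_skew, hSm, neg_neg, hc, lie_add, hSm1, zero_add, lie_smul, h2m, h3m]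
    match_scalars
    ring
  -- ⁅x⁺₃₀, x⁺₂₁⁆ = −pħ x⁺₂₀ x⁺₃₀
  have hd : ⁅xp21, xp10⁆ =
      ⁅xp20, xp11⁆ + -(((p : ℂ) * hbar / 2) • (xp20 * xp10 + xp10 * xp20)) :=
    sub_eq_iff_eq_add'.mp hY4p
  have hb : ⁅xp20, xp10⁆ = -((p : ℂ) • xp30) := by
    rw [hxp30, smul_smul, mul_inv_cancel₀ hpC, one_smul, lie_skew]
  have h2p : ⁅xp20, xp20 * xp10 + xp10 * xp20⁆ =
      xp20 * ⁅xp20, xp10⁆ + ⁅xp20, xp10⁆ * xp20 := by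
    rw [Ring.lie_def, Ring.lie_def]
    noncomm_ring
  have h3p : xp20 * ⁅xp20, xp10⁆ + ⁅xp20, xp10⁆ * xp20 = (-(2 * (p : ℂ))) • (xp20 * xp30) := by
    rw [hb, mul_neg, neg_mul, mul_smul_comm, smul_mul_assoc, e2]
    module
  have hlp : ⁅xp30, xp21⁆ = -(((p : ℂ) * hbar) • (xp20 * xp30)) := by
    conv_lhs => rw [hxp30]
    rw [smul_lie, ← lie_skew xp10 xp20, neg_lie, ← lie_skew _ xp21, hSp, neg_neg,
      hd, lie_add, hSp1, zero_add, lie_neg, lie_smul, h2p, h3p]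
    match_scalars
    field_simp
  -- product forms
  have e3 : xm30 * xm21 = ((p : ℂ) * hbar) • (xm20 * xm30) + xm21 * xm30 := by
    rw [Ring.lie_def] at hlm
    exact sub_eq_iff_eq_add.mp hlm
  have e4 : xp30 * xp21 = -(((p : ℂ) * hbar) • (xp20 * xp30)) + xp21 * xp30 := by
    rw [Ring.lie_def] at hlp
    exact sub_eq_iff_eq_add.mp hlp
  have key : ⁅xm30 ⊗ₜ[ℂ] xp30, xm20 ⊗ₜ[ℂ] xp21 - xm21 ⊗ₜ[ℂ] xp20⁆ =
      (-(2 * p * hbar)) • ((xm30 * xm20) ⊗ₜ[ℂ] (xp30 * xp20)) := by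
    rw [Ring.lie_def, mul_sub, sub_mul, Algebra.TensorProduct.tmul_mul_tmul,
      Algebra.TensorProduct.tmul_mul_tmul, Algebra.TensorProduct.tmul_mul_tmul,
      Algebra.TensorProduct.tmul_mul_tmul, e1, e2, e3, e4]
    simp only [TensorProduct.tmul_sub, TensorProduct.sub_tmul, TensorProduct.tmul_add,
      TensorProduct.add_tmul, TensorProduct.tmul_neg, TensorProduct.neg_tmul,
      TensorProduct.tmul_smul, ← TensorProduct.smul_tmul', smul_neg]
    module
  refine ⟨key, fun hne h0 => ?_⟩
  rw [key] at h0
  rcases smul_eq_zero.mp h0 with h | h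
  · have h2 : (2 : ℂ) * p * hbar ≠ 0 := by
      simp [hpC, hhbar]
    exact h2 (neg_eq_zero.mp h)
  · exact hne h
end

section
/- Let {A_γ(s)}_{γ∈Q₊} be elements with A_γ(s) ∈ (Y^≤_{−γ} ⊗ Y^≥_γ)[[s⁻¹]], A_0(s) = 1⊗1, satisfying the intertwining equation D(h;s)·A_γ(s) = −ħ Σ_{α∈Φ₊, γ−α∈Q₊} A_{γ−α}(s) x⁻_{α,0} ⊗ x⁺_{α,0} for all h ∈ h. Then for every γ ∈ Q₊, A_γ(s) is divisible by s^{−ν(γ)} in (Y ⊗ Y)[[s⁻¹]], where ν(γ) is the minimal number of positive roots summing to γ. -/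
open TensorProduct

/-- The weight of `γ = Σ_i γ_i α_i ∈ Q₊`, as a functional on the Cartan subalgebra. -/
noncomputable def rootWeight' {I H : Type*} [AddCommGroup H] [Module ℂ H]
    (αf : I → (H →ₗ[ℂ] ℂ)) (γ : I →₀ ℕ) (h : H) : ℂ :=
  γ.sum fun i n => (n : ℂ) * αf i h

/-- `ν(γ)`: the minimal number of positive roots summing to `γ`. -/
noncomputable def nuMin' {I : Type*} (Φ : Finset (I →₀ ℕ)) (γ : I →₀ ℕ) : ℕ :=
  sInf {k : ℕ | ∃ l : List (I →₀ ℕ), (∀ x ∈ l, x ∈ Φ) ∧ l.length = k ∧ l.sum = γ}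

/-- Let `{A_γ(s)}_{γ ∈ Q₊}` be weight-`(−γ, γ)` elements of `(Y ⊗ Y)[[s⁻¹]]` with
`A_0(s) = 1⊗1` satisfying the intertwining equation
`D(h;s)·A_γ(s) = −ħ Σ_{α ∈ Φ₊, γ−α ∈ Q₊} A_{γ−α}(s) x⁻_{α,0} ⊗ x⁺_{α,0}` for all `h ∈ 𝔥`,
where `D(h;s) = ad(T(h)⊗1 + 1⊗T(h) + s h⊗1)`.  Then every `A_γ(s)` is divisible by
`s^{−ν(γ)}`, i.e. its coefficients of `s^{−m}` vanish for `m < ν(γ)`. -/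
theorem divisibility_by_nu
    {I : Type*} [DecidableEq I]
    {Y : Type*} [Ring Y] [Algebra ℂ Y]
    {H : Type*} [AddCommGroup H] [Module ℂ H]
    (hbar : ℂ)
    (αf : I → (H →ₗ[ℂ] ℂ)) (T emb : H →ₗ[ℂ] Y)
    (Φ : Finset (I →₀ ℕ)) (h0Φ : (0 : I →₀ ℕ) ∉ Φ)
    -- the simple-root functionals are linearly independent; in particular every nonzero
    -- `γ ∈ Q₊` has nonzero weight functional:
    (hli : ∀ γ : I →₀ ℕ, γ ≠ 0 → ∃ h, rootWeight' αf γ h ≠ 0)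
    -- the root-vector tensors `x⁻_{α,0} ⊗ x⁺_{α,0}`:
    (xrm xrp : (I →₀ ℕ) → Y)
    -- the collection `A_γ(s)`:
    (A : (I →₀ ℕ) → PowerSeries (Y ⊗[ℂ] Y))
    (hA0 : A 0 = 1)
    -- weight conditions: `A_γ(s)` lies in `(Y_{−γ} ⊗ Y_γ)[[s⁻¹]]`:
    (hwt1 : ∀ γ m h, ⁅emb h ⊗ₜ[ℂ] (1 : Y), PowerSeries.coeff m (A γ)⁆ =
      -(rootWeight' αf γ h • PowerSeries.coeff m (A γ)))
    (hwt2 : ∀ γ m h, ⁅(1 : Y) ⊗ₜ[ℂ] emb h, PowerSeries.coeff m (A γ)⁆ =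
      rootWeight' αf γ h • PowerSeries.coeff m (A γ))
    -- the intertwining equation (`s¹`-coefficient and `s^{−m}`-coefficients, `m ≥ 0`):
    (hIE1 : ∀ γ h, ⁅emb h ⊗ₜ[ℂ] (1 : Y), PowerSeries.coeff 0 (A γ)⁆ = 0)
    (hIE : ∀ γ h m, ⁅T h ⊗ₜ[ℂ] (1 : Y) + (1 : Y) ⊗ₜ[ℂ] T h,
        PowerSeries.coeff m (A γ)⁆ +
      ⁅emb h ⊗ₜ[ℂ] (1 : Y), PowerSeries.coeff (m + 1) (A γ)⁆ =
      ∑ α ∈ Φ.filter (fun α => α ≤ γ),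
        (-hbar) • (PowerSeries.coeff m (A (γ - α)) * (xrm α ⊗ₜ[ℂ] xrp α))) :
    ∀ γ : I →₀ ℕ, ∀ m : ℕ, m < nuMin' Φ γ → PowerSeries.coeff m (A γ) = 0 := by
  have key : ∀ m : ℕ, ∀ γ : I →₀ ℕ,
      (∀ l : List (I →₀ ℕ), (∀ x ∈ l, x ∈ Φ) → l.sum = γ → m < l.length) →
      PowerSeries.coeff m (A γ) = 0 := by
    intro m
    induction m with
    | zero =>
      intro γ H
      have hγ : γ ≠ 0 := by
        rintro rfl
        exact absurd (H [] (by simp) (by simp)) (by simp)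
      obtain ⟨h, hw⟩ := hli γ hγ
      have h1 := hIE1 γ h
      rw [hwt1 γ 0 h, neg_eq_zero] at h1
      have h2 := inv_smul_smul₀ hw (PowerSeries.coeff 0 (A γ))
      rw [h1, smul_zero] at h2
      exact h2.symm
    | succ m IH =>
      intro γ H
      have hγ : γ ≠ 0 := by
        rintro rfl
        exact absurd (H [] (by simp) (by simp)) (by simp)
      obtain ⟨h, hw⟩ := hli γ hγ
      have hmain := hIE γ h m
      have hm0 : PowerSeries.coeff m (A γ) = 0 :=
        IH γ (fun l hl hs => Nat.lt_of_succ_lt (H l hl hs))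
      rw [hm0, (by rw [Ring.lie_def]; simp : ⁅T h ⊗ₜ[ℂ] (1 : Y) + (1 : Y) ⊗ₜ[ℂ] T h, (0 : Y ⊗[ℂ] Y)⁆ = 0), zero_add] at hmain
      have hsum : ∀ α ∈ Φ.filter (fun α => α ≤ γ),
          (-hbar) • (PowerSeries.coeff m (A (γ - α)) * (xrm α ⊗ₜ[ℂ] xrp α)) = 0 := by
        intro α hα
        obtain ⟨hαΦ, hαle⟩ := Finset.mem_filter.mp hα
        have hc : PowerSeries.coeff m (A (γ - α)) = 0 := by
          apply IH (γ - α)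
          intro l hl hs
          have hrep : (α :: l).sum = γ := by
            rw [List.sum_cons, hs, add_tsub_cancel_of_le hαle]
          have hmem : ∀ x ∈ (α :: l), x ∈ Φ := by
            intro x hx
            rcases List.mem_cons.mp hx with rfl | hx
            · exact hαΦ
            · exact hl x hx
          have := H (α :: l) hmem hrep
          simpa [Nat.succ_lt_succ_iff] using this
        rw [hc, zero_mul, smul_zero]
      rw [Finset.sum_eq_zero hsum] at hmain
      rw [hwt1 γ (m + 1) h, neg_eq_zero] at hmain
      have h2 := inv_smul_smul₀ hw (PowerSeries.coeff (m + 1) (A γ))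
      rw [hmain, smul_zero] at h2
      exact h2.symm
  intro γ m hm
  apply key m γ
  intro l hl hs
  have hmem : l.length ∈ {k : ℕ | ∃ l' : List (I →₀ ℕ),
      (∀ x ∈ l', x ∈ Φ) ∧ l'.length = k ∧ l'.sum = γ} := ⟨l, hl, rfl, hs⟩
  exact lt_of_lt_of_le hm (Nat.sInf_le hmem)
end
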